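/- arXiv:1511.03043 — 5 statements merged into one kernel-verified Lean document; each statement's English description precedes it below -/
import Mathlib

section
/- A polyomino P in ℤ² cannot contain two disjoint dominoes (two disjoint pairs of edge-adjacent cells) if and only if P is contained in a plus-shape, i.e., P is a subtile of the plus-pentomino. -/
/-- Edge-adjacency of cells in `ℤ²`. -/
def Adj (a b : ℤ × ℤ) : Prop := (a.1 - b.1).natAbs + (a.2 - b.2).natAbs = 1

/-- A finset of cells is connected (via edge-adjacency). -/
def Conn (R : Finset (ℤ × ℤ)) : Prop :=
  ∀ a ∈ R, ∀ b ∈ R, Relation.ReflTransGen (fun x y => x ∈ R ∧ y ∈ R ∧ Adj x y) a b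

/-- A domino: a pair of edge-adjacent cells. -/
def IsDomino (D : Finset (ℤ × ℤ)) : Prop := ∃ a b, Adj a b ∧ D = {a, b}

/-- The plus-shape centered at `c`. -/
def plusAt (c : ℤ × ℤ) : Finset (ℤ × ℤ) :=
  {c, c + (1, 0), c + (-1, 0), c + (0, 1), c + (0, -1)}

/-!
Two edge-adjacent cells have no common neighbour, so every domino inside a plus-shape contains its
centre, and two such dominoes meet. Conversely, let `P` be connected without two disjoint dominoes
and let `{u, v} ⊆ P` be a domino. The first step of a path in `P` from any other cell towards `u`
must land in `{u, v}`, so every cell of `P` is adjacent to `u` or `v`. A cell `x` adjacent to `v`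
but not to `u` and a cell `y` adjacent to `u` but not to `v` would give the disjoint dominoes
`{x, v}` and `{y, u}`; hence `P` lies in the plus-shape centred at `u` or at `v`.
-/

lemma Adj.symm {a b : ℤ × ℤ} (h : Adj a b) : Adj b a := by
  unfold Adj at *; omega

lemma Adj.ne {a b : ℤ × ℤ} (h : Adj a b) : a ≠ b := by
  rintro rfl; simp [Adj] at h

lemma Adj.not_adj_of_adj {a b x : ℤ × ℤ} (hab : Adj a b) (hxa : Adj x a) : ¬ Adj x b := by
  unfold Adj at *; omega

lemma mem_plusAt_iff {x c : ℤ × ℤ} : x ∈ plusAt c ↔ x = c ∨ Adj x c := by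
  simp only [plusAt, Adj, Finset.mem_insert, Finset.mem_singleton, Prod.ext_iff,
    Prod.fst_add, Prod.snd_add]
  omega

lemma IsDomino.center_mem_of_subset_plusAt {D : Finset (ℤ × ℤ)} {c : ℤ × ℤ} (hD : IsDomino D)
    (hsub : D ⊆ plusAt c) : c ∈ D := by
  obtain ⟨a, b, hab, rfl⟩ := hD
  have ha := mem_plusAt_iff.1 (hsub (Finset.mem_insert_self a {b}))
  have hb := mem_plusAt_iff.1 (hsub (Finset.mem_insert_of_mem (Finset.mem_singleton_self b)))
  rcases ha with rfl | hac
  · exact Finset.mem_insert_self _ _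
  rcases hb with rfl | hbc
  · exact Finset.mem_insert_of_mem (Finset.mem_singleton_self _)
  exact absurd hbc.symm (hab.not_adj_of_adj hac.symm)

def HasDisjointDominoes (P : Finset (ℤ × ℤ)) : Prop :=
  ∃ D₁ D₂ : Finset (ℤ × ℤ), IsDomino D₁ ∧ IsDomino D₂ ∧ D₁ ⊆ P ∧ D₂ ⊆ P ∧ Disjoint D₁ D₂

lemma not_hasDisjointDominoes_of_subset_plusAt {P : Finset (ℤ × ℤ)} {c : ℤ × ℤ}
    (hsub : P ⊆ plusAt c) : ¬ HasDisjointDominoes P := by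
  rintro ⟨D₁, D₂, hD₁, hD₂, hD₁P, hD₂P, hdisj⟩
  exact Finset.disjoint_left.1 hdisj (hD₁.center_mem_of_subset_plusAt (hD₁P.trans hsub))
    (hD₂.center_mem_of_subset_plusAt (hD₂P.trans hsub))

lemma hasDisjointDominoes_of_adj {P : Finset (ℤ × ℤ)} {a b c d : ℤ × ℤ}
    (ha : a ∈ P) (hb : b ∈ P) (hc : c ∈ P) (hd : d ∈ P) (hab : Adj a b) (hcd : Adj c d)
    (hac : a ≠ c) (had : a ≠ d) (hbc : b ≠ c) (hbd : b ≠ d) : HasDisjointDominoes P := by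
  refine ⟨{a, b}, {c, d}, ⟨a, b, hab, rfl⟩, ⟨c, d, hcd, rfl⟩, ?_, ?_, ?_⟩
  · exact Finset.insert_subset ha (Finset.singleton_subset_iff.2 hb)
  · exact Finset.insert_subset hc (Finset.singleton_subset_iff.2 hd)
  · simp [hac.symm, had.symm, hbc.symm, hbd.symm]

lemma Conn.exists_adj_of_ne {P : Finset (ℤ × ℤ)} (hP : Conn P) {a b : ℤ × ℤ} (ha : a ∈ P)
    (hb : b ∈ P) (hab : a ≠ b) : ∃ y ∈ P, Adj a y := by
  obtain h | ⟨y, ⟨-, hy, hay⟩, -⟩ := (hP a ha b hb).cases_head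
  · exact absurd h hab
  · exact ⟨y, hy, hay⟩

lemma adj_or_adj_of_not_hasDisjointDominoes {P : Finset (ℤ × ℤ)} (hP : ¬ HasDisjointDominoes P)
    (hconn : Conn P) {u v x : ℤ × ℤ} (hu : u ∈ P) (hv : v ∈ P) (huv : Adj u v) (hx : x ∈ P)
    (hxu : x ≠ u) (hxv : x ≠ v) : Adj x u ∨ Adj x v := by
  obtain ⟨y, hy, hxy⟩ := hconn.exists_adj_of_ne hx hu hxu
  by_cases hyu : y = u
  · exact .inl (hyu ▸ hxy)
  by_cases hyv : y = v
  · exact .inr (hyv ▸ hxy)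
  exact (hP (hasDisjointDominoes_of_adj hx hy hu hv hxy huv hxu hxv hyu hyv)).elim

lemma subset_plusAt_or_subset_plusAt_of_not_hasDisjointDominoes {P : Finset (ℤ × ℤ)}
    (hP : ¬ HasDisjointDominoes P) (hconn : Conn P) {u v : ℤ × ℤ} (hu : u ∈ P) (hv : v ∈ P)
    (huv : Adj u v) : P ⊆ plusAt u ∨ P ⊆ plusAt v := by
  by_contra! ⟨hPu, hPv⟩
  obtain ⟨x, hx, hxu⟩ := Finset.not_subset.1 hPu
  obtain ⟨y, hy, hyv⟩ := Finset.not_subset.1 hPv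
  rw [mem_plusAt_iff, not_or] at hxu hyv
  obtain ⟨hxu, hx_not_adj_u⟩ := hxu
  obtain ⟨hyv, hy_not_adj_v⟩ := hyv
  have hxv : x ≠ v := fun h => hx_not_adj_u (h ▸ huv.symm)
  have hyu : y ≠ u := fun h => hy_not_adj_v (h ▸ huv)
  have hx_adj_v : Adj x v :=
    (adj_or_adj_of_not_hasDisjointDominoes hP hconn hu hv huv hx hxu hxv).resolve_left hx_not_adj_u
  have hy_adj_u : Adj y u :=
    (adj_or_adj_of_not_hasDisjointDominoes hP hconn hu hv huv hy hyu hyv).resolve_right hy_not_adj_v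
  have hxy : x ≠ y := fun h => huv.not_adj_of_adj hy_adj_u (h ▸ hx_adj_v)
  exact hP (hasDisjointDominoes_of_adj hx hv hy hu hx_adj_v hy_adj_u hxy hxu (Ne.symm hyv) huv.ne.symm)

lemma Conn.exists_subset_plusAt_of_not_hasDisjointDominoes {P : Finset (ℤ × ℤ)} (hconn : Conn P)
    (hP : ¬ HasDisjointDominoes P) : ∃ c, P ⊆ plusAt c := by
  rcases P.eq_empty_or_nonempty with rfl | ⟨a, ha⟩
  · exact ⟨0, Finset.empty_subset _⟩
  by_cases hadj : ∃ u ∈ P, ∃ v ∈ P, Adj u v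
  · obtain ⟨u, hu, v, hv, huv⟩ := hadj
    rcases subset_plusAt_or_subset_plusAt_of_not_hasDisjointDominoes hP hconn hu hv huv with h | h
    exacts [⟨u, h⟩, ⟨v, h⟩]
  · push Not at hadj
    refine ⟨a, fun x hx => mem_plusAt_iff.2 (.inl ?_)⟩
    by_contra hxa
    obtain ⟨y, hy, hxy⟩ := hconn.exists_adj_of_ne hx ha hxa
    exact hadj x hx y hy hxy

theorem no_two_disjoint_dominoes_iff_subtile_of_plus_general (P : Finset (ℤ × ℤ))
    (hconn : Conn P) :
    (¬ ∃ D₁ D₂ : Finset (ℤ × ℤ), IsDomino D₁ ∧ IsDomino D₂ ∧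
        D₁ ⊆ P ∧ D₂ ⊆ P ∧ Disjoint D₁ D₂) ↔ ∃ c, P ⊆ plusAt c :=
  ⟨hconn.exists_subset_plusAt_of_not_hasDisjointDominoes,
    fun ⟨_, hsub⟩ => not_hasDisjointDominoes_of_subset_plusAt hsub⟩

/-- A polyomino cannot contain two disjoint dominoes if and only if it is contained
in a plus-shape, i.e. it is a subtile of the plus-pentomino. -/
theorem no_two_disjoint_dominoes_iff_subtile_of_plus (P : Finset (ℤ × ℤ))
    (hne : P.Nonempty) (hconn : Conn P) :
    (¬ ∃ D₁ D₂ : Finset (ℤ × ℤ), IsDomino D₁ ∧ IsDomino D₂ ∧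
        D₁ ⊆ P ∧ D₂ ⊆ P ∧ Disjoint D₁ D₂) ↔ ∃ c, P ⊆ plusAt c :=
  no_two_disjoint_dominoes_iff_subtile_of_plus_general P hconn
end

section
/- Let S be a finite set of polyomino tiles in ℤ^d (closed under rotations if rotations are allowed) with the fountain property: for every tile s ∈ S placed in ℤ^d and every unit cell u edge-adjacent to s with u ∉ s, the region s ∪ {u} is tileable by S. Let b ∈ S. Then every finite connected region R ⊆ ℤ^d that contains a translate (rotation) of b is tileable by S. -/
variable {d : ℕ}

/-- Edge-adjacency of cells in `ℤ^d`: the cells differ by 1 in exactly one coordinate. -/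
def AdjD (a b : Fin d → ℤ) : Prop :=
  ∃ j, (a j - b j).natAbs = 1 ∧ ∀ i, i ≠ j → a i = b i

/-- A finset of cells of `ℤ^d` is connected (via edge-adjacency). -/
def ConnD (R : Finset (Fin d → ℤ)) : Prop :=
  ∀ a ∈ R, ∀ b ∈ R, Relation.ReflTransGen (fun x y => x ∈ R ∧ y ∈ R ∧ AdjD x y) a b

/-- The translate of tile `t` by the vector `v`. -/
def placeD (t : Finset (Fin d → ℤ)) (v : Fin d → ℤ) : Finset (Fin d → ℤ) :=
  t.image (· + v)

/-- `l` is a tiling of `R` by translates of tiles in `S`. -/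
def IsTilingD (S : Set (Finset (Fin d → ℤ))) (R : Finset (Fin d → ℤ))
    (l : List (Finset (Fin d → ℤ))) : Prop :=
  (∀ p ∈ l, ∃ t ∈ S, ∃ v, p = placeD t v) ∧ l.Pairwise Disjoint ∧ l.foldr (· ∪ ·) ∅ = R

/-- `R` is tileable by translates of tiles in `S`. -/
def TileableD (S : Set (Finset (Fin d → ℤ))) (R : Finset (Fin d → ℤ)) : Prop :=
  ∃ l, IsTilingD S R l

/-!
Grow a tiling outwards from the placed copy of `b`: as long as the tiled part `A` of the
connected region `R` is not all of `R`, some cell `u ∈ R \ A` is adjacent to a cell of `A`,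
and the fountain property retiles `u` together with the tile containing that neighbour.
-/

section FoldrUnion

variable {α : Type*} [DecidableEq α]

lemma List.mem_foldr_union {l : List (Finset α)} {x : α} :
    x ∈ l.foldr (· ∪ ·) ∅ ↔ ∃ p ∈ l, x ∈ p := by
  induction l with
  | nil => simp
  | cons a t ih => simp [ih]

lemma List.subset_foldr_union {l : List (Finset α)} {p : Finset α} (hp : p ∈ l) :
    p ⊆ l.foldr (· ∪ ·) ∅ :=
  fun _ hx => List.mem_foldr_union.mpr ⟨p, hp, hx⟩

lemma List.foldr_union_append (l m : List (Finset α)) :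
    (l ++ m).foldr (· ∪ ·) ∅ = l.foldr (· ∪ ·) ∅ ∪ m.foldr (· ∪ ·) ∅ := by
  induction l with
  | nil => simp
  | cons a t ih => simp [ih, Finset.union_assoc]

end FoldrUnion

def FountainD (S : Set (Finset (Fin d → ℤ))) : Prop :=
  ∀ s ∈ S, ∀ v : Fin d → ℤ, ∀ u, u ∉ placeD s v →
    (∃ c ∈ placeD s v, AdjD u c) → TileableD S (insert u (placeD s v))

section Tiling

variable {S : Set (Finset (Fin d → ℤ))} {A B : Finset (Fin d → ℤ)}
  {l m : List (Finset (Fin d → ℤ))}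

lemma IsTilingD.subset (hl : IsTilingD S A l) {p : Finset (Fin d → ℤ)} (hp : p ∈ l) :
    p ⊆ A :=
  hl.2.2 ▸ List.subset_foldr_union hp

lemma IsTilingD.append (hl : IsTilingD S A l) (hm : IsTilingD S B m) (hAB : Disjoint A B) :
    IsTilingD S (A ∪ B) (l ++ m) := by
  refine ⟨fun p hp => ?_, ?_, ?_⟩
  · rcases List.mem_append.mp hp with hp | hp
    exacts [hl.1 p hp, hm.1 p hp]
  · exact List.pairwise_append.mpr ⟨hl.2.1, hm.2.1,
      fun p hp q hq => hAB.mono (hl.subset hp) (hm.subset hq)⟩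
  · rw [List.foldr_union_append, hl.2.2, hm.2.2]

lemma IsTilingD.erase (hl : IsTilingD S A l) {p : Finset (Fin d → ℤ)} (hp : p ∈ l) :
    IsTilingD S (A \ p) (l.erase p) := by
  have hperm := List.perm_cons_erase hp
  have hpw : (p :: l.erase p).Pairwise Disjoint := (hperm.pairwise_iff fun h => h.symm).mp hl.2.1
  have hdisj : Disjoint p ((l.erase p).foldr (· ∪ ·) ∅) :=
    Finset.disjoint_left.mpr fun x hxp hx => by
      obtain ⟨q, hq, hxq⟩ := List.mem_foldr_union.mp hx
      exact Finset.disjoint_left.mp ((List.pairwise_cons.mp hpw).1 q hq) hxp hxq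
  have hA : A = p ∪ (l.erase p).foldr (· ∪ ·) ∅ := by
    rw [← hl.2.2, hperm.foldr_eq, List.foldr_cons]
  refine ⟨fun q hq => hl.1 q (List.mem_of_mem_erase hq),
    hl.2.1.sublist (List.erase_sublist ..), ?_⟩
  rw [hA, Finset.union_sdiff_cancel_left hdisj]

lemma tileableD_placeD {s : Finset (Fin d → ℤ)} (hs : s ∈ S) (v : Fin d → ℤ) :
    TileableD S (placeD s v) :=
  ⟨[placeD s v], by simpa using ⟨s, hs, v, rfl⟩, by simp, by simp⟩

lemma TileableD.insert_of_adjD (hS : FountainD S) (hA : TileableD S A) {u c : Fin d → ℤ}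
    (hu : u ∉ A) (hc : c ∈ A) (hadj : AdjD u c) : TileableD S (insert u A) := by
  obtain ⟨l, hl⟩ := hA
  obtain ⟨p, hpl, hcp⟩ := List.mem_foldr_union.mp (hl.2.2 ▸ hc)
  have hpA := hl.subset hpl
  obtain ⟨s, hs, w, rfl⟩ := hl.1 _ hpl
  obtain ⟨m, hm⟩ := hS s hs w u (fun h => hu (hpA h)) ⟨c, hcp, hadj⟩
  refine ⟨m ++ l.erase (placeD s w), ?_⟩
  convert hm.append (hl.erase hpl) ?_ using 1
  · rw [Finset.insert_union, Finset.union_sdiff_of_subset hpA]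
  · rw [Finset.insert_eq, Finset.disjoint_union_left]
    exact ⟨Finset.disjoint_singleton_left.mpr fun h => hu (Finset.mem_sdiff.mp h).1,
      Finset.disjoint_sdiff⟩

end Tiling

lemma ConnD.exists_adjD_of_ssubset {R A : Finset (Fin d → ℤ)} (hR : ConnD R) (hAR : A ⊂ R)
    (hA : A.Nonempty) : ∃ u ∈ R, u ∉ A ∧ ∃ c ∈ A, AdjD u c := by
  obtain ⟨r, hrR, hrA⟩ := Finset.exists_of_ssubset hAR
  obtain ⟨a, ha⟩ := hA
  -- follow a path from `r` to `a` and stop at its first step into `A`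
  suffices ∀ x, Relation.ReflTransGen (fun x y => x ∈ R ∧ y ∈ R ∧ AdjD x y) x a →
      x ∉ A → ∃ u ∈ R, u ∉ A ∧ ∃ c ∈ A, AdjD u c from
    this r (hR r hrR a (hAR.subset ha)) hrA
  intro x hx
  induction hx using Relation.ReflTransGen.head_induction_on with
  | refl => exact fun h => (h ha).elim
  | @head x z hxz _ ih =>
    intro hxA
    by_cases hzA : z ∈ A
    · exact ⟨x, hxz.1, hxA, z, hzA, hxz.2.2⟩
    · exact ih hzA

lemma TileableD.of_subset_of_connD {S : Set (Finset (Fin d → ℤ))} (hS : FountainD S)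
    {R A : Finset (Fin d → ℤ)} (hR : ConnD R) (hAR : A ⊆ R) (hA : A.Nonempty)
    (hAt : TileableD S A) : TileableD S R := by
  obtain hAR | rfl := hAR.ssubset_or_eq
  · obtain ⟨u, huR, huA, c, hc, hadj⟩ := hR.exists_adjD_of_ssubset hAR hA
    have hlt : (R \ insert u A).card < (R \ A).card :=
      Finset.card_lt_card <| Finset.ssubset_iff_of_subset (Finset.sdiff_subset_sdiff le_rfl
        (Finset.subset_insert u A)) |>.mpr ⟨u, by simp [huR, huA], by simp⟩
    exact of_subset_of_connD hS hR (Finset.insert_subset huR hAR.subset)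
      (Finset.insert_nonempty u A) (hAt.insert_of_adjD hS huA hc hadj)
  · exact hAt
termination_by (R \ A).card

theorem fountain_tiles_regions_containing_generator_general (d : ℕ)
    (S : Set (Finset (Fin d → ℤ)))
    (htiles : ∀ s ∈ S, s.Nonempty ∧ ConnD s)
    (hfountain : ∀ s ∈ S, ∀ v : Fin d → ℤ, ∀ u, u ∉ placeD s v →
      (∃ c ∈ placeD s v, AdjD u c) → TileableD S (insert u (placeD s v)))
    (b : Finset (Fin d → ℤ)) (hb : b ∈ S)
    (R : Finset (Fin d → ℤ)) (hconn : ConnD R)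
    (hcontains : ∃ v, placeD b v ⊆ R) : TileableD S R := by
  obtain ⟨v, hv⟩ := hcontains
  exact TileableD.of_subset_of_connD hfountain hconn hv ((htiles b hb).1.image _)
    (tileableD_placeD hb v)

/-- If `S` is a finite fountain set of polyomino tiles in `ℤ^d` (already closed under whatever
rotations are allowed) and `b ∈ S`, then every finite connected region containing a translate
of `b` is tileable by `S`. -/
theorem fountain_tiles_regions_containing_generator (d : ℕ)
    (S : Set (Finset (Fin d → ℤ))) (hfin : S.Finite)
    (htiles : ∀ s ∈ S, s.Nonempty ∧ ConnD s)
    (hfountain : ∀ s ∈ S, ∀ v : Fin d → ℤ, ∀ u, u ∉ placeD s v →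
      (∃ c ∈ placeD s v, AdjD u c) → TileableD S (insert u (placeD s v)))
    (b : Finset (Fin d → ℤ)) (hb : b ∈ S)
    (R : Finset (Fin d → ℤ)) (hconn : ConnD R)
    (hcontains : ∃ v, placeD b v ⊆ R) : TileableD S R :=
  fountain_tiles_regions_containing_generator_general d S htiles hfountain b hb R hconn hcontains
end

section
/- Every polyomino in ℤ² of size at least 2 can be tiled by the set S₂ = {domino, straight tromino, L-tromino, T-tetromino, plus-pentomino} with rotations allowed. -/
/-- Rotation of the plane by 90 degrees. -/
def rot (p : ℤ × ℤ) : ℤ × ℤ := (-p.2, p.1)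

/-- The placement of tile `t` rotated by `k` quarter-turns and translated by `v`. -/
def placeR (t : Finset (ℤ × ℤ)) (k : ℕ) (v : ℤ × ℤ) : Finset (ℤ × ℤ) :=
  (t.image (rot^[k])).image (· + v)

/-- `l` is a tiling of `R` by translates of rotations of tiles in `S`:
the pieces are placements of tiles of `S`, are pairwise disjoint, and their union is `R`. -/
def IsTilingR (S : Set (Finset (ℤ × ℤ))) (R : Finset (ℤ × ℤ))
    (l : List (Finset (ℤ × ℤ))) : Prop :=
  (∀ p ∈ l, ∃ t ∈ S, ∃ k < 4, ∃ v, p = placeR t k v) ∧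
  l.Pairwise Disjoint ∧ l.foldr (· ∪ ·) ∅ = R

/-- `R` is tileable by translates of rotations of tiles in `S`. -/
def TileableR (S : Set (Finset (ℤ × ℤ))) (R : Finset (ℤ × ℤ)) : Prop :=
  ∃ l, IsTilingR S R l

/-- The domino. -/
def D2 : Finset (ℤ × ℤ) := {(0, 0), (1, 0)}
/-- The straight tromino (3-bar). -/
def I3 : Finset (ℤ × ℤ) := {(0, 0), (1, 0), (2, 0)}
/-- The L-tromino. -/
def L3 : Finset (ℤ × ℤ) := {(0, 0), (1, 0), (0, 1)}
/-- The T-tetromino. -/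
def T4 : Finset (ℤ × ℤ) := {(0, 0), (1, 0), (2, 0), (1, 1)}
/-- The plus-pentomino. -/
def P5 : Finset (ℤ × ℤ) := {(1, 0), (0, 1), (1, 1), (2, 1), (1, 2)}

/-- The fountain set `S₂`. -/
def S2 : Set (Finset (ℤ × ℤ)) := {D2, I3, L3, T4, P5}

/-!
A connected set of at least two cells splits into stars, a centre together with a nonempty set of
its neighbours, and in the square grid a centre with one, two, three or four neighbours is a
placement of the domino, the straight or L-tromino, the T-tetromino or the plus-pentomino.
To split off a star, take the depths `f` in a breadth-first tree rooted at some cell, a deepest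
cell `v` and its parent `p`. Removing `p` together with its children of maximal depth leaves a set
in which every cell keeps its parent, unless only the grandparent of `v` is left; then that
grandparent joins the star at `p`.
-/

open Finset

def IsPartitionInto {α : Type*} [DecidableEq α] (P : Finset α → Prop) (R : Finset α)
    (l : List (Finset α)) : Prop :=
  (∀ p ∈ l, P p) ∧ l.Pairwise Disjoint ∧ l.foldr (· ∪ ·) ∅ = R

namespace IsPartitionInto

variable {α : Type*} [DecidableEq α] {P Q : Finset α → Prop} {R A : Finset α}
  {l : List (Finset α)}

lemma mono (hl : IsPartitionInto P R l) (hPQ : ∀ p, P p → Q p) : IsPartitionInto Q R l :=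
  ⟨fun p hp => hPQ p (hl.1 p hp), hl.2⟩

lemma singleton (hR : P R) : IsPartitionInto P R [R] :=
  ⟨by simpa using hR, List.pairwise_singleton _ _, by simp⟩

lemma subset_of_mem (hl : IsPartitionInto P R l) {p : Finset α} (hp : p ∈ l) : p ⊆ R := by
  rw [← hl.2.2]
  clear hl
  induction l with
  | nil => simp at hp
  | cons a l ih =>
    rcases List.mem_cons.1 hp with rfl | hp
    · exact subset_union_left
    · exact (ih hp).trans subset_union_right

lemma cons (hl : IsPartitionInto P (R \ A) l) (hAR : A ⊆ R) (hA : P A) :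
    IsPartitionInto P R (A :: l) := by
  refine ⟨?_, List.pairwise_cons.2 ⟨fun p hp => ?_, hl.2.1⟩, ?_⟩
  · simpa [hA] using hl.1
  · exact disjoint_of_subset_right (hl.subset_of_mem hp) disjoint_sdiff
  · rw [List.foldr_cons, hl.2.2, union_sdiff_of_subset hAR]

end IsPartitionInto

lemma Finset.eq_insert_of_card_sdiff_le_one {α : Type*} [DecidableEq α] {R A : Finset α}
    {g : α} (hAR : A ⊆ R) (hg : g ∈ R \ A) (h1 : #(R \ A) ≤ 1) : R = insert g A := by
  refine Subset.antisymm (fun x hx => ?_) (insert_subset (mem_sdiff.1 hg).1 hAR)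
  by_cases hxA : x ∈ A
  · exact mem_insert_of_mem hxA
  · rw [card_le_one.1 h1 x (mem_sdiff.2 ⟨hx, hxA⟩) g hg]
    exact mem_insert_self g A

namespace SimpleGraph

variable {V : Type*} (G : SimpleGraph V)

def within (R : Finset V) : SimpleGraph V where
  Adj x y := x ∈ R ∧ y ∈ R ∧ G.Adj x y
  symm := ⟨fun _ _ h => ⟨h.2.1, h.1, h.2.2.symm⟩⟩
  loopless := ⟨fun _ h => G.irrefl h.2.2⟩

def ConnectedOn (R : Finset V) : Prop :=
  ∀ a ∈ R, ∀ b ∈ R, (G.within R).Reachable a b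

def IsStar [DecidableEq V] (A : Finset V) : Prop :=
  ∃ c N, N.Nonempty ∧ (∀ x ∈ N, G.Adj c x) ∧ A = insert c N

structure IsRootedDepth (R : Finset V) (r : V) (f : V → ℕ) : Prop where
  root_mem : r ∈ R
  depth_root : f r = 0
  exists_parent : ∀ w ∈ R, w ≠ r → ∃ q ∈ R, G.Adj w q ∧ f q + 1 = f w

variable {G}

lemma IsStar.nonempty [DecidableEq V] {A : Finset V} (hA : G.IsStar A) : A.Nonempty := by
  obtain ⟨c, N, -, -, rfl⟩ := hA
  exact insert_nonempty c N

lemma Reachable.exists_adj_dist_add_one {u r : V} (h : G.Reachable u r) (hne : u ≠ r) :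
    ∃ q, G.Adj u q ∧ G.dist q r + 1 = G.dist u r := by
  obtain ⟨p, hp⟩ := h.exists_walk_length_eq_dist
  cases p with
  | nil => exact absurd rfl hne
  | cons hadj p =>
    refine ⟨_, hadj, le_antisymm ?_ ?_⟩
    · simpa [← hp] using dist_le p
    · obtain ⟨p', hp'⟩ := p.reachable.exists_walk_length_eq_dist
      simpa [← hp'] using dist_le (Walk.cons hadj p')

lemma ConnectedOn.exists_isRootedDepth {R : Finset V} (hR : G.ConnectedOn R) {r : V}
    (hr : r ∈ R) : ∃ f, G.IsRootedDepth R r f := by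
  refine ⟨fun x => (G.within R).dist x r, hr, dist_self, fun w hw hwr => ?_⟩
  obtain ⟨q, hadj, hq⟩ := (hR w hw r hr).exists_adj_dist_add_one hwr
  exact ⟨q, hadj.2.1, hadj.2.2, hq⟩

namespace IsRootedDepth

variable {R : Finset V} {r : V} {f : V → ℕ}

lemma eq_root_of_depth_eq_zero (hf : G.IsRootedDepth R r f) {w : V} (hw : w ∈ R)
    (h0 : f w = 0) : w = r := by
  by_contra hwr
  obtain ⟨q, -, -, hq⟩ := hf.exists_parent w hw hwr
  omega

variable [DecidableEq V]

lemma sdiff (hf : G.IsRootedDepth R r f) {A : Finset V} (hr : r ∉ A)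
    (hA : ∀ w ∈ R \ A, ∀ q ∈ A, G.Adj w q → f q + 1 ≠ f w) : G.IsRootedDepth (R \ A) r f where
  root_mem := mem_sdiff.2 ⟨hf.root_mem, hr⟩
  depth_root := hf.depth_root
  exists_parent w hw hwr := by
    obtain ⟨q, hq, hadj, hfq⟩ := hf.exists_parent w (mem_sdiff.1 hw).1 hwr
    exact ⟨q, mem_sdiff.2 ⟨hq, fun hqA => hA w hw q hqA hadj hfq⟩, hadj, hfq⟩

lemma isStar_of_forall_depth_le_one (hf : G.IsRootedDepth R r f) (hcard : 2 ≤ #R)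
    (h1 : ∀ w ∈ R, f w ≤ 1) : G.IsStar R := by
  refine ⟨r, R.erase r, ?_, fun w hw => ?_, (insert_erase hf.root_mem).symm⟩
  · rw [← card_pos, card_erase_of_mem hf.root_mem]
    omega
  · obtain ⟨hwr, hwR⟩ := mem_erase.1 hw
    obtain ⟨q, hq, hadj, hfq⟩ := hf.exists_parent w hwR hwr
    have hqr : q = r := hf.eq_root_of_depth_eq_zero hq (by have := h1 w hwR; omega)
    exact hqr ▸ hadj.symm

theorem isStar_or_exists_isStar (hf : G.IsRootedDepth R r f) (hcard : 2 ≤ #R) :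
    G.IsStar R ∨ ∃ A ⊆ R, G.IsStar A ∧ G.IsRootedDepth (R \ A) r f ∧ 2 ≤ #(R \ A) := by
  classical
  obtain ⟨v, hv, hvmax⟩ := R.exists_max_image f ⟨r, hf.root_mem⟩
  by_cases hd : f v ≤ 1
  · exact Or.inl (hf.isStar_of_forall_depth_le_one hcard fun w hw => (hvmax w hw).trans hd)
  have hvr : v ≠ r := by rintro rfl; rw [hf.depth_root] at hd; omega
  obtain ⟨p, hp, hvp, hfp⟩ := hf.exists_parent v hv hvr
  have hpr : p ≠ r := by rintro rfl; rw [hf.depth_root] at hfp; omega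
  obtain ⟨g, hg, hpg, hfg⟩ := hf.exists_parent p hp hpr
  set C := R.filter fun w => G.Adj p w ∧ f w = f v
  have hsub : insert p C ⊆ R := insert_subset hp (filter_subset _ _)
  have hstar : G.IsStar (insert p C) :=
    ⟨p, C, ⟨v, mem_filter.2 ⟨hv, hvp.symm, rfl⟩⟩, fun x hx => (mem_filter.1 hx).2.1, rfl⟩
  have hdepth (w : V) (hw : w ∈ insert p C) : f w = f v - 1 ∨ f w = f v := by
    rcases mem_insert.1 hw with rfl | hw
    · omega
    · exact Or.inr (mem_filter.1 hw).2.2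
  have hrest : G.IsRootedDepth (R \ insert p C) r f := by
    refine hf.sdiff (fun hr => by have := hdepth r hr; rw [hf.depth_root] at this; omega) ?_
    intro w hw q hq hadj hfq
    rcases mem_insert.1 hq with rfl | hq
    · exact (mem_sdiff.1 hw).2
        (mem_insert_of_mem (mem_filter.2 ⟨(mem_sdiff.1 hw).1, hadj.symm, by omega⟩))
    · have := (mem_filter.1 hq).2.2
      have := hvmax w (mem_sdiff.1 hw).1
      omega
  by_cases h2 : 2 ≤ #(R \ insert p C)
  · exact Or.inr ⟨_, hsub, hstar, hrest, h2⟩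
  have hg' : g ∈ R \ insert p C := mem_sdiff.2 ⟨hg, fun h => by have := hdepth g h; omega⟩
  refine Or.inl ⟨p, insert g C, insert_nonempty _ _, fun x hx => ?_, ?_⟩
  · rcases mem_insert.1 hx with rfl | hx
    · exact hpg
    · exact (mem_filter.1 hx).2.1
  · rw [insert_comm]
    exact eq_insert_of_card_sdiff_le_one hsub hg' (by omega)

theorem exists_isPartitionInto_isStar (hf : G.IsRootedDepth R r f) (hcard : 2 ≤ #R) :
    ∃ l, IsPartitionInto G.IsStar R l := by
  induction hn : #R using Nat.strong_induction_on generalizing R with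
  | _ n ih =>
    rcases hf.isStar_or_exists_isStar hcard with hR | ⟨A, hAR, hA, hrest, h2⟩
    · exact ⟨[R], .singleton hR⟩
    · obtain ⟨l, hl⟩ := ih _ (hn ▸ card_lt_card (sdiff_ssubset hAR hA.nonempty)) hrest h2 rfl
      exact ⟨A :: l, hl.cons hAR hA⟩

end IsRootedDepth

theorem ConnectedOn.exists_isPartitionInto_isStar [DecidableEq V] {R : Finset V}
    (hR : G.ConnectedOn R) (hcard : 2 ≤ #R) : ∃ l, IsPartitionInto G.IsStar R l := by
  obtain ⟨r, hr⟩ : R.Nonempty := card_pos.1 (by omega)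
  obtain ⟨f, hf⟩ := hR.exists_isRootedDepth hr
  exact hf.exists_isPartitionInto_isStar hcard

end SimpleGraph

def gridGraph : SimpleGraph (ℤ × ℤ) where
  Adj := Adj
  symm := ⟨fun _ _ h => by unfold Adj at *; omega⟩
  loopless := ⟨fun _ h => by simp [Adj] at h⟩

lemma Conn.connectedOn_gridGraph {R : Finset (ℤ × ℤ)} (h : Conn R) : gridGraph.ConnectedOn R :=
  fun a ha b hb => (SimpleGraph.reachable_iff_reflTransGen a b).2 (h a ha b hb)

def unitVecs : Finset (ℤ × ℤ) := {(1, 0), (-1, 0), (0, 1), (0, -1)}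

lemma sub_mem_unitVecs_of_adj {a b : ℤ × ℤ} (h : Adj a b) : b - a ∈ unitVecs := by
  obtain ⟨a1, a2⟩ := a
  obtain ⟨b1, b2⟩ := b
  simp only [Adj] at h
  simp only [unitVecs, mem_insert, mem_singleton, Prod.mk_sub_mk, Prod.ext_iff]
  omega

lemma placeR_add (t : Finset (ℤ × ℤ)) (k : ℕ) (v w : ℤ × ℤ) :
    placeR t k (v + w) = (placeR t k v).image (· + w) := by
  simp [placeR, image_image, Function.comp_def, add_assoc]

lemma exists_placeR_eq_insert_zero : ∀ E ∈ unitVecs.powerset, E.Nonempty →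
    ∃ t ∈ [D2, I3, L3, T4, P5], ∃ k ∈ List.range 4, ∃ w ∈ Finset.Icc (-1, -1) (1, 1),
      insert 0 E = placeR t k w := by
  decide

lemma SimpleGraph.IsStar.exists_placeR {A : Finset (ℤ × ℤ)} (hA : gridGraph.IsStar A) :
    ∃ t ∈ S2, ∃ k < 4, ∃ v, A = placeR t k v := by
  obtain ⟨c, N, hN, hadj, rfl⟩ := hA
  have hE : N.image (· - c) ∈ unitVecs.powerset := by
    simp only [mem_powerset, image_subset_iff]
    exact fun x hx => sub_mem_unitVecs_of_adj (hadj x hx)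
  obtain ⟨t, ht, k, hk, w, -, hw⟩ := exists_placeR_eq_insert_zero _ hE (hN.image _)
  refine ⟨t, by simpa [S2] using ht, k, List.mem_range.1 hk, w + c, ?_⟩
  rw [placeR_add, ← hw, image_insert, image_image]
  simp [Function.comp_def]

/-- Every polyomino of size at least 2 can be tiled by
`S₂` = {domino, straight tromino, L-tromino, T-tetromino, plus-pentomino}, rotations allowed. -/
theorem S2_tiles_everything (R : Finset (ℤ × ℤ)) (hconn : Conn R) (hcard : 2 ≤ R.card) :
    TileableR S2 R := by
  obtain ⟨l, hl⟩ := hconn.connectedOn_gridGraph.exists_isPartitionInto_isStar hcard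
  exact ⟨l, hl.mono fun _ => SimpleGraph.IsStar.exists_placeR⟩
end

section
/- With the fixed-orientation tiles D = {(0,0),(1,0)} (horizontal domino) and L = {(0,0),(1,0),(1,1)} (no rotations), the two configurations of Local Move 1 tile the same region: for any k ≥ 1, the region covered by [an L-tile at position p, k horizontal dominoes in the row above shifted appropriately, and an L-tile at the right end] equals the region covered by [a horizontal domino at p, k−1 dominoes, and a 2×2 block of two stacked horizontal dominoes at the right end]; consequently, if one configuration appears in a tiling of a region R, replacing it by the other yields another valid tiling of R. -/
/-!
Both configurations cover the cells `(0,0), (1,0), (2k+1,0), (2k+2,0)` of the bottom row and the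
segment `1 ≤ x ≤ 2k+2` of the row above: in the first, the L-tiles supply `(1,1)` and `(2k+2,1)`
and the dominoes fill `2 ≤ x ≤ 2k+1`; in the second, the dominoes fill `1 ≤ x ≤ 2k` and the extra
domino covers `2k+1, 2k+2`. A list `l₁ ++ l₂` tiles `R` exactly when each part tiles its own union
and the two unions are disjoint with union `R`, so a prefix may be replaced by any tiling of the
region it covers.
-/

attribute [local instance] Classical.propDecidable

/-- The translate of tile `t` by `v` (fixed orientation: no rotations or reflections). -/
def placeT (t : Finset (ℤ × ℤ)) (v : ℤ × ℤ) : Finset (ℤ × ℤ) := t.image (· + v)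

/-- `l` is a tiling of `R` by translates of tiles in `S` (no rotations):
the pieces are translates of tiles of `S`, are pairwise disjoint, and their union is `R`. -/
def IsTilingT (S : Set (Finset (ℤ × ℤ))) (R : Finset (ℤ × ℤ))
    (l : List (Finset (ℤ × ℤ))) : Prop :=
  (∀ p ∈ l, ∃ t ∈ S, ∃ v, p = placeT t v) ∧ l.Pairwise Disjoint ∧ l.foldr (· ∪ ·) ∅ = R

/-- `R` is tileable by translates of tiles in `S`. -/
def TileableT (S : Set (Finset (ℤ × ℤ))) (R : Finset (ℤ × ℤ)) : Prop :=
  ∃ l, IsTilingT S R l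

/-- The horizontal domino. -/
def D : Finset (ℤ × ℤ) := {(0, 0), (1, 0)}

/-- The (fixed-orientation) L-tile. -/
def L : Finset (ℤ × ℤ) := {(0, 0), (1, 0), (1, 1)}

/-- First configuration of Local Move 1: an L-tile, `k` dominoes on the row above, and an
L-tile at the right end. -/
def moveA (k : ℕ) : List (Finset (ℤ × ℤ)) :=
  placeT L ((0 : ℤ), (0 : ℤ)) :: placeT L (2 * (k : ℤ) + 1, 0) ::
    (List.range k).map (fun j => placeT D (2 * (j : ℤ) + 2, 1))

/-- Second configuration of Local Move 1: dominoes only. -/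
def moveB (k : ℕ) : List (Finset (ℤ × ℤ)) :=
  placeT D ((0 : ℤ), (0 : ℤ)) :: placeT D (2 * (k : ℤ) + 1, 0) ::
    placeT D (2 * (k : ℤ) + 1, 1) ::
    (List.range k).map (fun j => placeT D (2 * (j : ℤ) + 1, 1))

namespace List

variable {α : Type*} [DecidableEq α]

theorem mem_foldr_union_s11 {l : List (Finset α)} {x : α} :
    x ∈ l.foldr (· ∪ ·) ∅ ↔ ∃ s ∈ l, x ∈ s := by
  induction l with
  | nil => simp
  | cons s l ih => simp [ih]

theorem foldr_union_append_s11 (l₁ l₂ : List (Finset α)) :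
    (l₁ ++ l₂).foldr (· ∪ ·) ∅ = l₁.foldr (· ∪ ·) ∅ ∪ l₂.foldr (· ∪ ·) ∅ := by
  induction l₁ with
  | nil => simp
  | cons s l ih => simp [ih, Finset.union_assoc]

theorem disjoint_foldr_union_left {l : List (Finset α)} {t : Finset α} :
    _root_.Disjoint (l.foldr (· ∪ ·) ∅) t ↔ ∀ s ∈ l, _root_.Disjoint s t := by
  induction l with
  | nil => simp
  | cons s l ih => simp [ih]

theorem disjoint_foldr_union_right {l : List (Finset α)} {t : Finset α} :
    _root_.Disjoint t (l.foldr (· ∪ ·) ∅) ↔ ∀ s ∈ l, _root_.Disjoint t s := by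
  simp only [_root_.disjoint_comm (a := t), disjoint_foldr_union_left]

end List

section Tiling

variable {S : Set (Finset (ℤ × ℤ))} {R : Finset (ℤ × ℤ)} {l₁ l₂ rest : List (Finset (ℤ × ℤ))}

theorem isTilingT_append_iff :
    IsTilingT S R (l₁ ++ l₂) ↔
      IsTilingT S (l₁.foldr (· ∪ ·) ∅) l₁ ∧ IsTilingT S (l₂.foldr (· ∪ ·) ∅) l₂ ∧
        Disjoint (l₁.foldr (· ∪ ·) ∅) (l₂.foldr (· ∪ ·) ∅) ∧
        l₁.foldr (· ∪ ·) ∅ ∪ l₂.foldr (· ∪ ·) ∅ = R := by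
  simp only [IsTilingT, List.forall_mem_append, List.pairwise_append, List.foldr_union_append_s11,
    List.disjoint_foldr_union_left, and_true]
  simp only [List.disjoint_foldr_union_right]
  tauto

theorem IsTilingT.replace_prefix (h : IsTilingT S (l₁.foldr (· ∪ ·) ∅) l₂)
    (h' : IsTilingT S R (l₁ ++ rest)) : IsTilingT S R (l₂ ++ rest) := by
  rw [isTilingT_append_iff] at h' ⊢
  rw [h.2.2]
  exact ⟨h, h'.2⟩

end Tiling

theorem mem_placeT {t : Finset (ℤ × ℤ)} {v x : ℤ × ℤ} : x ∈ placeT t v ↔ x - v ∈ t := by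
  simp [placeT, sub_eq_add_neg]

theorem mem_D {x : ℤ × ℤ} : x ∈ D ↔ x.2 = 0 ∧ (x.1 = 0 ∨ x.1 = 1) := by
  simp [D, Prod.ext_iff]
  tauto

theorem mem_L {x : ℤ × ℤ} : x ∈ L ↔ x.2 = 0 ∧ (x.1 = 0 ∨ x.1 = 1) ∨ x.2 = 1 ∧ x.1 = 1 := by
  simp [L, Prod.ext_iff]
  tauto

section DominoRow

variable (a b : ℤ) (k : ℕ)

theorem mem_foldr_dominoRow {x : ℤ × ℤ} :
    x ∈ ((List.range k).map fun j : ℕ => placeT D (2 * (j : ℤ) + a, b)).foldr (· ∪ ·) ∅ ↔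
      x.2 = b ∧ a ≤ x.1 ∧ x.1 < a + 2 * k := by
  simp only [List.mem_foldr_union_s11, List.mem_map, List.mem_range, exists_exists_and_eq_and,
    mem_placeT, mem_D, Prod.fst_sub, Prod.snd_sub]
  constructor
  · rintro ⟨j, hj, h⟩
    omega
  · intro h
    exact ⟨((x.1 - a) / 2).toNat, by omega, by omega⟩

theorem pairwise_disjoint_dominoRow :
    ((List.range k).map fun j : ℕ => placeT D (2 * (j : ℤ) + a, b)).Pairwise Disjoint := by
  rw [List.pairwise_map]
  refine List.pairwise_lt_range.imp fun hij => Finset.disjoint_left.2 fun x => ?_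
  simp only [mem_placeT, mem_D, Prod.fst_sub, Prod.snd_sub]
  omega

end DominoRow

-- `moveA` and `moveB` are stated with `List.range k` coerced to `List ℤ` through the list monad.
theorem moveA_eq (k : ℕ) :
    moveA k = placeT L (0, 0) :: placeT L (2 * (k : ℤ) + 1, 0) ::
      (List.range k).map fun j : ℕ => placeT D (2 * (j : ℤ) + 2, 1) := by
  simp only [moveA, bind_pure_comp, List.map_eq_map, List.map_map]
  rfl

theorem moveB_eq (k : ℕ) :
    moveB k = placeT D (0, 0) :: placeT D (2 * (k : ℤ) + 1, 0) :: placeT D (2 * (k : ℤ) + 1, 1) ::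
      (List.range k).map fun j : ℕ => placeT D (2 * (j : ℤ) + 1, 1) := by
  simp only [moveB, bind_pure_comp, List.map_eq_map, List.map_map]
  rfl

theorem foldr_moveB_eq_foldr_moveA (k : ℕ) :
    (moveB k).foldr (· ∪ ·) ∅ = (moveA k).foldr (· ∪ ·) ∅ := by
  ext x
  simp only [moveA_eq, moveB_eq, List.foldr_cons, Finset.mem_union, mem_foldr_dominoRow, mem_placeT,
    mem_D, mem_L, Prod.fst_sub, Prod.snd_sub]
  omega

theorem pairwise_disjoint_moveA {k : ℕ} (hk : 1 ≤ k) : (moveA k).Pairwise Disjoint := by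
  simp only [moveA_eq, List.pairwise_cons, List.forall_mem_cons, List.forall_mem_map, List.mem_range,
    pairwise_disjoint_dominoRow, and_true, Finset.disjoint_left, mem_placeT, mem_D, mem_L,
    Prod.fst_sub, Prod.snd_sub]
  refine ⟨⟨?_, fun j hj => ?_⟩, fun j hj => ?_⟩ <;> intro x <;> omega

theorem pairwise_disjoint_moveB {k : ℕ} (hk : 1 ≤ k) : (moveB k).Pairwise Disjoint := by
  simp only [moveB_eq, List.pairwise_cons, List.forall_mem_cons, List.forall_mem_map, List.mem_range,
    pairwise_disjoint_dominoRow, and_true, Finset.disjoint_left, mem_placeT, mem_D,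
    Prod.fst_sub, Prod.snd_sub]
  refine ⟨⟨?_, ?_, fun j hj => ?_⟩, ⟨?_, fun j hj => ?_⟩, fun j hj => ?_⟩ <;> intro x <;> omega

theorem exists_placeT_of_mem_moveA {k : ℕ} :
    ∀ p ∈ moveA k, ∃ t ∈ ({D, L} : Set (Finset (ℤ × ℤ))), ∃ v, p = placeT t v := by
  simp only [moveA_eq, List.forall_mem_cons, List.forall_mem_map]
  exact ⟨⟨L, by simp, _, rfl⟩, ⟨L, by simp, _, rfl⟩, fun j _ => ⟨D, by simp, _, rfl⟩⟩

theorem exists_placeT_of_mem_moveB {k : ℕ} :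
    ∀ p ∈ moveB k, ∃ t ∈ ({D, L} : Set (Finset (ℤ × ℤ))), ∃ v, p = placeT t v := by
  simp only [moveB_eq, List.forall_mem_cons, List.forall_mem_map]
  exact ⟨⟨D, by simp, _, rfl⟩, ⟨D, by simp, _, rfl⟩, ⟨D, by simp, _, rfl⟩,
    fun j _ => ⟨D, by simp, _, rfl⟩⟩

/-- Local move 1: the two configurations are both valid tilings of the same region, so in
any tiling of a region `R`, one configuration may be replaced by the other. -/
theorem local_move_one (k : ℕ) (hk : 1 ≤ k) :
    IsTilingT {D, L} ((moveA k).foldr (· ∪ ·) ∅) (moveA k) ∧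
    IsTilingT {D, L} ((moveA k).foldr (· ∪ ·) ∅) (moveB k) ∧
    (∀ (R : Finset (ℤ × ℤ)) (rest : List (Finset (ℤ × ℤ))),
      IsTilingT {D, L} R (moveA k ++ rest) → IsTilingT {D, L} R (moveB k ++ rest)) := by
  have hB : IsTilingT {D, L} ((moveA k).foldr (· ∪ ·) ∅) (moveB k) :=
    ⟨exists_placeT_of_mem_moveB, pairwise_disjoint_moveB hk, foldr_moveB_eq_foldr_moveA k⟩
  exact ⟨⟨exists_placeT_of_mem_moveA, pairwise_disjoint_moveA hk, rfl⟩, hB,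
    fun _ _ => hB.replace_prefix⟩
end

section
/- For n ≥ 1 let R_n = ⋃_{j=0}^{n-1} ({(1,0),(0,1),(1,1),(2,1),(1,2)} + (2j,0)) be the horizontal chain of n overlapped plus-pentominoes (each consecutive pair sharing one arm cell), as in the paper's family 𝒞; for n = 1 this is the plus-pentomino. Then R_n is not tileable by the set S_a = {domino, straight tromino, L-tromino, T-tetromino} with rotations allowed. -/
/-- The set `S_a`. -/
def Sa : Set (Finset (ℤ × ℤ)) := {D2, I3, L3, T4}

/-- The crenellated region: a horizontal chain of `n` overlapped plus-pentominoes. -/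
def Rcren (n : ℕ) : Finset (ℤ × ℤ) :=
  (Finset.range n).biUnion (fun j => P5.image (· + ((2 * (j : ℤ), 0) : ℤ × ℤ)))

/-! ### Auxiliary lemmas -/

/-- The forced T-tetromino piece at the left end. -/
def Tp : Finset (ℤ × ℤ) := {(0, 1), (1, 0), (1, 1), (1, 2)}

lemma mem_Rcren {n : ℕ} {x y : ℤ} :
    (x, y) ∈ Rcren n ↔ ∃ j : ℕ, j < n ∧
      ((y = 0 ∧ x = 2 * j + 1) ∨ (y = 1 ∧ (x = 2 * j ∨ x = 2 * j + 1 ∨ x = 2 * j + 2)) ∨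
        (y = 2 ∧ x = 2 * j + 1)) := by
  simp only [Rcren, Finset.mem_biUnion, Finset.mem_range, Finset.mem_image, P5,
    Finset.mem_insert, Finset.mem_singleton, Prod.ext_iff, Prod.mk_add_mk, Prod.fst_add,
    Prod.snd_add]
  constructor
  · rintro ⟨j, hj, b, hb, h1, h2⟩
    refine ⟨j, hj, ?_⟩
    rcases hb with h | h | h | h | h <;> omega
  · rintro ⟨j, hj, h⟩
    rcases h with ⟨hy, hx⟩ | ⟨hy, hx | hx | hx⟩ | ⟨hy, hx⟩
    · exact ⟨j, hj, (1, 0), by simp, by simp; omega⟩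
    · exact ⟨j, hj, (0, 1), by simp, by simp; omega⟩
    · exact ⟨j, hj, (1, 1), by simp, by simp; omega⟩
    · exact ⟨j, hj, (2, 1), by simp, by simp; omega⟩
    · exact ⟨j, hj, (1, 2), by simp, by simp; omega⟩

lemma adj_rot {a b : ℤ × ℤ} (h : Adj a b) : Adj (rot a) (rot b) := by
  simp only [Adj, rot] at *; omega

lemma adj_rot_iter (k : ℕ) {a b : ℤ × ℤ} (h : Adj a b) : Adj (rot^[k] a) (rot^[k] b) := by
  induction k with
  | zero => simpa using h
  | succ m ih => rw [Function.iterate_succ_apply', Function.iterate_succ_apply']; exact adj_rot ih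

lemma adj_add {a b v : ℤ × ℤ} (h : Adj a b) : Adj (a + v) (b + v) := by
  simp only [Adj, Prod.fst_add, Prod.snd_add] at *; omega

lemma conn_image {R : Finset (ℤ × ℤ)} (f : ℤ × ℤ → ℤ × ℤ)
    (hf : ∀ a b, Adj a b → Adj (f a) (f b)) (h : Conn R) : Conn (R.image f) := by
  intro a ha b hb
  obtain ⟨a0, ha0, rfl⟩ := Finset.mem_image.1 ha
  obtain ⟨b0, hb0, rfl⟩ := Finset.mem_image.1 hb
  have H := h a0 ha0 b0 hb0
  clear ha hb ha0 hb0
  induction H with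
  | refl => exact .refl
  | tail _ h2 ih =>
      exact ih.tail ⟨Finset.mem_image_of_mem f h2.1, Finset.mem_image_of_mem f h2.2.1,
        hf _ _ h2.2.2⟩

lemma adj_symm_rel {R : Finset (ℤ × ℤ)} :
    Symmetric (fun x y => x ∈ R ∧ y ∈ R ∧ Adj x y) := by
  rintro x y ⟨hx, hy, h⟩
  exact ⟨hy, hx, by unfold Adj at *; omega⟩

lemma conn_of_hub {R : Finset (ℤ × ℤ)} {h : ℤ × ℤ}
    (hh : ∀ a ∈ R, Relation.ReflTransGen (fun x y => x ∈ R ∧ y ∈ R ∧ Adj x y) h a) :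
    Conn R := fun a ha b hb =>
  haveI : Std.Symm (fun x y : ℤ × ℤ => x ∈ R ∧ y ∈ R ∧ Adj x y) := ⟨fun _ _ h => adj_symm_rel h⟩
  (Std.Symm.symm (r := Relation.ReflTransGen (fun x y : ℤ × ℤ => x ∈ R ∧ y ∈ R ∧ Adj x y)) _ _ (hh a ha)).trans (hh b hb)

lemma conn_tile {t : Finset (ℤ × ℤ)} (ht : t ∈ Sa) : Conn t := by
  have hSa : t = D2 ∨ t = I3 ∨ t = L3 ∨ t = T4 := ht
  rcases hSa with rfl | rfl | rfl | rfl
  · exact conn_of_hub (h := (0, 0)) (by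
      intro a ha
      fin_cases ha
      · exact .refl
      · exact .single ⟨by decide, by decide, by unfold Adj; decide⟩)
  · exact conn_of_hub (h := (1, 0)) (by
      intro a ha
      fin_cases ha
      · exact .single ⟨by decide, by decide, by unfold Adj; decide⟩
      · exact .refl
      · exact .single ⟨by decide, by decide, by unfold Adj; decide⟩)
  · exact conn_of_hub (h := (0, 0)) (by
      intro a ha
      fin_cases ha
      · exact .refl
      · exact .single ⟨by decide, by decide, by unfold Adj; decide⟩
      · exact .single ⟨by decide, by decide, by unfold Adj; decide⟩)
  · exact conn_of_hub (h := (1, 0)) (by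
      intro a ha
      fin_cases ha
      · exact .single ⟨by decide, by decide, by unfold Adj; decide⟩
      · exact .refl
      · exact .single ⟨by decide, by decide, by unfold Adj; decide⟩
      · exact .single ⟨by decide, by decide, by unfold Adj; decide⟩)

lemma rot_inj : Function.Injective rot := by
  intro a b h
  simp only [rot, Prod.ext_iff] at h
  exact Prod.ext h.2 (by omega)

lemma card_place (t : Finset (ℤ × ℤ)) (k : ℕ) (v : ℤ × ℤ) :
    (placeR t k v).card = t.card := by
  unfold placeR
  rw [Finset.card_image_of_injective _ (add_left_injective v),
    Finset.card_image_of_injective _ (rot_inj.iterate k)]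

lemma piece_facts {p : Finset (ℤ × ℤ)}
    (hs : ∃ t ∈ Sa, ∃ k < 4, ∃ v, p = placeR t k v) :
    Conn p ∧ 2 ≤ p.card ∧ p.card ≤ 4 := by
  obtain ⟨t, ht, k, _, v, rfl⟩ := hs
  refine ⟨?_, ?_⟩
  · unfold placeR
    exact conn_image _ (fun a b h => adj_add h)
      (conn_image _ (fun a b h => adj_rot_iter k h) (conn_tile ht))
  · rw [card_place]
    have : t = D2 ∨ t = I3 ∨ t = L3 ∨ t = T4 := ht
    rcases this with rfl | rfl | rfl | rfl <;> exact ⟨by decide, by decide⟩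

lemma exists_adj {R : Finset (ℤ × ℤ)} (h : Conn R) {a b : ℤ × ℤ}
    (ha : a ∈ R) (hb : b ∈ R) (hab : a ≠ b) : ∃ c ∈ R, Adj a c := by
  rcases (h a ha b hb).cases_head with h1 | ⟨c, hc, _⟩
  · exact absurd h1 hab
  · exact ⟨c, hc.2.1, hc.2.2⟩

lemma foldr_subset {l : List (Finset (ℤ × ℤ))} {p : Finset (ℤ × ℤ)} (hp : p ∈ l) :
    p ⊆ l.foldr (· ∪ ·) ∅ := by
  induction l with
  | nil => simp at hp
  | cons q t ih =>
      rcases List.mem_cons.1 hp with h | h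
      · subst h; exact Finset.subset_union_left
      · exact (ih h).trans Finset.subset_union_right

lemma mem_foldr {l : List (Finset (ℤ × ℤ))} {x : ℤ × ℤ}
    (hx : x ∈ l.foldr (· ∪ ·) ∅) : ∃ p ∈ l, x ∈ p := by
  induction l with
  | nil => simp at hx
  | cons q t ih =>
      rcases Finset.mem_union.1 hx with h | h
      · exact ⟨q, List.mem_cons_self, h⟩
      · obtain ⟨p, hp, hxp⟩ := ih h
        exact ⟨p, List.mem_cons_of_mem _ hp, hxp⟩

lemma disjoint_foldr {l : List (Finset (ℤ × ℤ))} {p : Finset (ℤ × ℤ)}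
    (h : ∀ q ∈ l, Disjoint p q) : Disjoint p (l.foldr (· ∪ ·) ∅) := by
  induction l with
  | nil => simp
  | cons q t ih =>
      simp only [List.foldr_cons, Finset.disjoint_union_right]
      exact ⟨h q List.mem_cons_self, ih (fun r hr => h r (List.mem_cons_of_mem _ hr))⟩

lemma foldr_erase {l : List (Finset (ℤ × ℤ))} (hd : l.Pairwise Disjoint)
    {p : Finset (ℤ × ℤ)} (hp : p ∈ l) :
    (l.erase p).foldr (· ∪ ·) ∅ = l.foldr (· ∪ ·) ∅ \ p := by
  induction l with
  | nil => simp at hp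
  | cons q t ih =>
      rcases List.pairwise_cons.1 hd with ⟨hq, ht⟩
      by_cases h : q = p
      · subst h
        rw [List.erase_cons_head]
        simp only [List.foldr_cons]
        rw [Finset.union_sdiff_cancel_left (disjoint_foldr hq)]
      · have hpt : p ∈ t := by
          rcases List.mem_cons.1 hp with h' | h'
          · exact absurd h'.symm h
          · exact h'
        rw [List.erase_cons_tail (by simp [h]), List.foldr_cons, List.foldr_cons,
          ih ht hpt, Finset.union_sdiff_distrib]
        congr 1
        exact ((Finset.sdiff_eq_self_iff_disjoint).2 (hq p hpt)).symm

lemma eq_of_shared {l : List (Finset (ℤ × ℤ))} (hd : l.Pairwise Disjoint)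
    {p q : Finset (ℤ × ℤ)} {x : ℤ × ℤ} (hp : p ∈ l) (hq : q ∈ l)
    (hxp : x ∈ p) (hxq : x ∈ q) : p = q := by
  by_contra hne
  haveI : Std.Symm (α := Finset (ℤ × ℤ)) Disjoint := ⟨fun _ _ h => h.symm⟩
  have : Disjoint p q := hd.forall hp hq hne
  exact Finset.disjoint_left.1 this hxp hxq

lemma nbr01 {n : ℕ} {d : ℤ × ℤ} (hd : d ∈ Rcren n) (h : Adj (0, 1) d) : d = (1, 1) := by
  obtain ⟨x, y⟩ := d
  obtain ⟨j, hj, H⟩ := mem_Rcren.1 hd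
  unfold Adj at h
  simp only [Prod.mk.injEq]
  omega

lemma nbr10 {n : ℕ} {d : ℤ × ℤ} (hd : d ∈ Rcren n) (h : Adj (1, 0) d) : d = (1, 1) := by
  obtain ⟨x, y⟩ := d
  obtain ⟨j, hj, H⟩ := mem_Rcren.1 hd
  unfold Adj at h
  simp only [Prod.mk.injEq]
  omega

lemma nbr12 {n : ℕ} {d : ℤ × ℤ} (hd : d ∈ Rcren n) (h : Adj (1, 2) d) : d = (1, 1) := by
  obtain ⟨x, y⟩ := d
  obtain ⟨j, hj, H⟩ := mem_Rcren.1 hd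
  unfold Adj at h
  simp only [Prod.mk.injEq]
  omega

lemma forced {n : ℕ} (hn : 1 ≤ n) {l : List (Finset (ℤ × ℤ))}
    (h : IsTilingR Sa (Rcren n) l) : ∃ p ∈ l, p = Tp := by
  obtain ⟨hs, hd, hu⟩ := h
  have hmem : ∀ c ∈ Tp, c ∈ Rcren n := by
    intro c hc
    fin_cases hc <;> exact mem_Rcren.2 ⟨0, hn, by omega⟩
  have key : ∀ c ∈ ({(0, 1), (1, 0), (1, 2)} : Finset (ℤ × ℤ)),
      (∀ d ∈ Rcren n, Adj c d → d = (1, 1)) →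
      ∃ p ∈ l, c ∈ p ∧ ((1 : ℤ), (1 : ℤ)) ∈ p := by
    intro c hc hnb
    have hcR : c ∈ Rcren n := by
      fin_cases hc <;> exact hmem _ (by decide)
    obtain ⟨p, hp, hcp⟩ := mem_foldr (l := l) (by rw [hu]; exact hcR)
    have hpR : p ⊆ Rcren n := hu ▸ foldr_subset hp
    obtain ⟨hconn, hc2, _⟩ := piece_facts (hs p hp)
    obtain ⟨b, hb, hbne⟩ := Finset.exists_mem_ne (s := p) (by omega) c
    obtain ⟨d, hdp, hadj⟩ := exists_adj hconn hcp hb (Ne.symm hbne)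
    have : d = (1, 1) := hnb d (hpR hdp) hadj
    exact ⟨p, hp, hcp, this ▸ hdp⟩
  obtain ⟨p1, hp1, hc1, h11a⟩ := key (0, 1) (by decide) (fun d hd h => nbr01 hd h)
  obtain ⟨p2, hp2, hc2, h11b⟩ := key (1, 0) (by decide) (fun d hd h => nbr10 hd h)
  obtain ⟨p3, hp3, hc3, h11c⟩ := key (1, 2) (by decide) (fun d hd h => nbr12 hd h)
  have e12 : p1 = p2 := eq_of_shared hd hp1 hp2 h11a h11b
  have e13 : p1 = p3 := eq_of_shared hd hp1 hp3 h11a h11c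
  subst e12; subst e13
  obtain ⟨_, _, hc4⟩ := piece_facts (hs p1 hp1)
  have hsub : Tp ⊆ p1 := by
    intro c hc
    fin_cases hc
    exacts [hc1, hc2, h11a, hc3]
  have hTc : Tp.card = 4 := by decide
  refine ⟨p1, hp1, ?_⟩
  exact (Finset.eq_of_subset_of_card_le hsub (by omega)).symm

lemma sdiff_one : Rcren 1 \ Tp = {((2 : ℤ), (1 : ℤ))} := by
  ext ⟨x, y⟩
  simp only [Finset.mem_sdiff, mem_Rcren, Tp, Finset.mem_insert, Finset.mem_singleton,
    Prod.mk.injEq]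
  constructor
  · rintro ⟨⟨j, hj, H⟩, hT⟩
    omega
  · rintro ⟨hx, hy⟩
    exact ⟨⟨0, by omega, by omega⟩, by omega⟩

lemma sdiff_succ (n : ℕ) (hn : 1 ≤ n) :
    Rcren (n + 1) \ Tp = (Rcren n).image (· + ((2, 0) : ℤ × ℤ)) := by
  ext ⟨x, y⟩
  simp only [Finset.mem_sdiff, Tp, Finset.mem_insert, Finset.mem_singleton, Prod.mk.injEq,
    Finset.mem_image]
  constructor
  · rintro ⟨hmem, hT⟩
    obtain ⟨j, hj, H⟩ := mem_Rcren.1 hmem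
    by_cases hj0 : j = 0
    · subst hj0
      have : x = 2 ∧ y = 1 := by omega
      exact ⟨(0, 1), mem_Rcren.2 ⟨0, hn, by omega⟩, by simp [Prod.ext_iff]; omega⟩
    · refine ⟨(x - 2, y), mem_Rcren.2 ⟨j - 1, by omega, by omega⟩, by simp [Prod.ext_iff]⟩
  · rintro ⟨⟨a, b⟩, hab, heq⟩
    obtain ⟨j, hj, H⟩ := mem_Rcren.1 hab
    simp only [Prod.mk_add_mk, Prod.mk.injEq] at heq
    constructor
    · exact mem_Rcren.2 ⟨j + 1, by omega, by omega⟩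
    · omega

lemma tiling_erase {R : Finset (ℤ × ℤ)} {l : List (Finset (ℤ × ℤ))} {p : Finset (ℤ × ℤ)}
    (h : IsTilingR Sa R l) (hp : p ∈ l) : IsTilingR Sa (R \ p) (l.erase p) := by
  obtain ⟨hs, hd, hu⟩ := h
  refine ⟨fun q hq => hs q (List.mem_of_mem_erase hq),
    List.Pairwise.sublist List.erase_sublist hd, ?_⟩
  rw [foldr_erase hd hp, hu]

lemma foldr_map_image (f : ℤ × ℤ → ℤ × ℤ) (l : List (Finset (ℤ × ℤ))) :
    (l.map (Finset.image f)).foldr (· ∪ ·) ∅ = (l.foldr (· ∪ ·) ∅).image f := by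
  induction l with
  | nil => simp
  | cons q t ih => simp [ih, Finset.image_union]

lemma tileable_shift {R : Finset (ℤ × ℤ)} {v : ℤ × ℤ}
    (h : TileableR Sa (R.image (· + v))) : TileableR Sa R := by
  obtain ⟨l, hshape, hdisj, hun⟩ := h
  refine ⟨l.map (Finset.image (· + (-v))), ?_, ?_, ?_⟩
  · intro p hp
    obtain ⟨q, hq, rfl⟩ := List.mem_map.1 hp
    obtain ⟨t, ht, k, hk, w, rfl⟩ := hshape q hq
    refine ⟨t, ht, k, hk, w + -v, ?_⟩
    rw [placeR, placeR, Finset.image_image]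
    congr 1
    funext x
    simp [add_assoc]
  · exact List.Pairwise.map _
      (fun a b h => (Finset.disjoint_image (add_left_injective (-v))).2 h) hdisj
  · rw [foldr_map_image, hun, Finset.image_image]
    have : ((· + (-v)) ∘ (· + v)) = (id : ℤ × ℤ → ℤ × ℤ) := by
      funext x; simp
    rw [this, Finset.image_id]

/-- No crenellated chain of plus-pentominoes is tileable by
`S_a` = {domino, straight tromino, L-tromino, T-tetromino} (rotations allowed). -/
theorem crenellated_not_tileable (n : ℕ) (hn : 1 ≤ n) : ¬ TileableR Sa (Rcren n) := by
  obtain ⟨m, rfl⟩ : ∃ m, n = m + 1 := ⟨n - 1, by omega⟩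
  clear hn
  induction m with
  | zero =>
      rintro ⟨l, hT⟩
      obtain ⟨p, hp, rfl⟩ := forced le_rfl hT
      have h2 := tiling_erase hT hp
      rw [sdiff_one] at h2
      obtain ⟨hs, hd, hu⟩ := h2
      obtain ⟨q, hq, hxq⟩ := mem_foldr (l := l.erase Tp)
        (x := ((2 : ℤ), (1 : ℤ))) (by rw [hu]; simp)
      obtain ⟨_, hc2, _⟩ := piece_facts (hs q hq)
      have hsub : q ⊆ {((2 : ℤ), (1 : ℤ))} := hu ▸ foldr_subset hq
      have := Finset.card_le_card hsub
      simp at this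
      omega
  | succ k ih =>
      rintro ⟨l, hT⟩
      obtain ⟨p, hp, rfl⟩ := forced (by omega) hT
      have h2 := tiling_erase hT hp
      rw [sdiff_succ (k + 1) (by omega)] at h2
      exact ih (tileable_shift ⟨_, h2⟩)
end
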